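/- For every n ≥ 1, R_{ρ₂(n)} = R_n + R_{n−1} and R_{T(n)} = R_n, where ρ₂(n) = ρ(ρ(n)) = ⌊nφ² + 1/φ⌋ and T(n) = ⌊nφ + 2/φ⌋. -/

import Mathlib

/-- The golden ratio `φ = (1 + √5)/2`. -/
noncomputable def phi : ℝ := (1 + Real.sqrt 5) / 2

/-- `ρ₂(n) = ⌊nφ² + 1/φ⌋`. -/
noncomputable def rho2 (n : ℕ) : ℕ := ⌊(n : ℝ) * phi ^ 2 + 1 / phi⌋₊

/-- `T(n) = ⌊nφ + 2/φ⌋`. -/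
noncomputable def T (n : ℕ) : ℕ := ⌊(n : ℝ) * phi + 2 / phi⌋₊

/-- `R n` is the number of representations of `n` as a sum of distinct
Fibonacci numbers `F i`, `i ≥ 2`. -/
noncomputable def R (n : ℕ) : ℕ :=
  Nat.card {S : Finset ℕ // (∀ i ∈ S, 2 ≤ i) ∧ ∑ i ∈ S, Nat.fib i = n}

open Real Finset

noncomputable def rho (n : ℕ) : ℕ := ⌊(n : ℝ) * phi + 1 / phi⌋₊

lemma phi_eq : phi = goldenRatio := rfl
lemma one_lt_phi : 1 < phi := phi_eq ▸ one_lt_goldenRatio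
lemma phi_pos : 0 < phi := lt_trans one_pos one_lt_phi
lemma phi_lt_two : phi < 2 := phi_eq ▸ goldenRatio_lt_two
lemma phi_sq : phi ^ 2 = phi + 1 := phi_eq ▸ goldenRatio_sq
lemma phi_gt_three_halves : 3 / 2 < phi := by
  have h5 : (2:ℝ) < Real.sqrt 5 := by
    have := Real.sq_sqrt (by norm_num : (5:ℝ) ≥ 0)
    nlinarith [Real.sqrt_nonneg (5:ℝ)]
  rw [phi]; linarith
lemma inv_phi_eq : 1 / phi = phi - 1 := by
  rw [div_eq_iff (ne_of_gt phi_pos)]; nlinarith [phi_sq]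
lemma goldenConj_eq : goldenConj = -(phi - 1) := by
  rw [phi_eq]; rw [← one_sub_goldenConj]; ring

/-- geometric tail bound -/
lemma sum_pow_lt {x : ℝ} (hx0 : 0 < x) (hx1 : x < 1) (S : Finset ℕ) (hS : ∀ j ∈ S, 1 ≤ j) :
    ∑ j ∈ S, x ^ j < x / (1 - x) := by
  classical
  set N := S.sup id with hN
  have hsub : S ⊆ Finset.Icc 1 N := by
    intro j hj
    exact Finset.mem_Icc.mpr ⟨hS j hj, Finset.le_sup (f := id) hj⟩
  have h1 : ∑ j ∈ S, x ^ j ≤ ∑ j ∈ Finset.Icc 1 N, x ^ j :=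
    Finset.sum_le_sum_of_subset_of_nonneg hsub (fun j _ _ => le_of_lt (pow_pos hx0 j))
  have h2 : ∑ j ∈ Finset.Icc 1 N, x ^ j = ∑ j ∈ Finset.range (N + 1), x ^ j - 1 := by
    have hins : Finset.range (N+1) = insert 0 (Finset.Icc 1 N) := by
      ext j; simp [Nat.lt_succ_iff, Nat.le_iff_lt_or_eq]; omega
    rw [hins, Finset.sum_insert (by simp)]
    rw [pow_zero]; ring
  have h3 : ∑ j ∈ Finset.range (N + 1), x ^ j = (1 - x ^ (N+1)) / (1 - x) := by
    rw [geom_sum_eq (ne_of_lt hx1)]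
    rw [div_eq_div_iff (by linarith) (by linarith)]; ring
  have h4 : (1 - x ^ (N+1)) / (1 - x) < 1 / (1 - x) := by
    gcongr
    · nlinarith [pow_pos hx0 (N+1)]
  have h5 : 1 / (1-x) - 1 = x / (1-x) := by
    rw [sub_eq_iff_eq_add, div_add' _ _ _ (by linarith : (1:ℝ)-x ≠ 0)]
    ring_nf
  linarith

lemma c_pos : 0 < phi - 1 := by linarith [one_lt_phi]
lemma c_sq : (phi - 1)^2 = 2 - phi := by nlinarith [phi_sq]

lemma tail_bounds (S : Finset ℕ) (h2 : ∀ i ∈ S, 2 ≤ i) :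
    -(2 - phi) < ∑ i ∈ S, goldenConj ^ i ∧ ∑ i ∈ S, goldenConj ^ i < phi - 1 := by
  classical
  set c := phi - 1 with hc
  set y := c ^ 2 with hy
  have hy2 : y = 2 - phi := c_sq
  have hcpos : 0 < c := c_pos
  have hclt : c < 1 := by simp [hc]; linarith [phi_lt_two]
  have hypos : 0 < y := by positivity
  have hylt : y < 1 := by nlinarith
  have hyc : y / (1 - y) = c := by
    rw [hy2]
    have : 1 - (2 - phi) = c := by rw [hc]; ring
    rw [this, ← c_sq, ← hc, pow_two, mul_div_assoc,
      div_self (ne_of_gt hcpos), mul_one]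
  have hpsi : goldenConj = -c := by rw [goldenConj_eq]
  set A := S.filter (fun i => Even i) with hA
  set B := S.filter (fun i => ¬ Even i) with hB
  -- even part
  have hAeq : ∀ i ∈ A, goldenConj ^ i = y ^ (i / 2) := by
    intro i hi
    have hev : Even i := (Finset.mem_filter.mp hi).2
    have : 2 * (i / 2) = i := by
      obtain ⟨k, hk⟩ := hev; omega
    rw [hpsi, hev.neg_pow, hy, ← pow_mul, this]
  have hEimg : ∑ i ∈ A, goldenConj ^ i = ∑ j ∈ A.image (· / 2), y ^ j := by
    rw [Finset.sum_congr rfl hAeq]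
    rw [Finset.sum_image]
    intro a ha b hb hab
    have hea : Even a := (Finset.mem_filter.mp ha).2
    have heb : Even b := (Finset.mem_filter.mp hb).2
    obtain ⟨k, hk⟩ := hea; obtain ⟨l, hl⟩ := heb; simp only at hab; omega
  have hE1 : ∀ j ∈ A.image (· / 2), 1 ≤ j := by
    intro j hj
    obtain ⟨i, hi, rfl⟩ := Finset.mem_image.mp hj
    have := h2 i (Finset.mem_filter.mp hi).1
    omega
  have hEbound : ∑ i ∈ A, goldenConj ^ i < c := by
    rw [hEimg, ← hyc]
    exact sum_pow_lt hypos hylt _ hE1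
  have hEnonneg : 0 ≤ ∑ i ∈ A, goldenConj ^ i := by
    rw [hEimg]
    exact Finset.sum_nonneg (fun j _ => le_of_lt (pow_pos hypos j))
  -- odd part
  have hBeq : ∀ i ∈ B, goldenConj ^ i = -(c * y ^ ((i - 1) / 2)) := by
    intro i hi
    have hodd : Odd i := Nat.not_even_iff_odd.mp (Finset.mem_filter.mp hi).2
    obtain ⟨k, hk⟩ := hodd
    have h1 : (i - 1) / 2 = k := by omega
    rw [hpsi, (by subst hk; exact ⟨k, by ring⟩ : Odd i).neg_pow, h1, hy, ← pow_mul]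
    rw [show i = 2 * k + 1 by omega, pow_succ]
    ring
  have hBimg : ∑ i ∈ B, goldenConj ^ i = -(c * ∑ j ∈ B.image (fun i => (i - 1) / 2), y ^ j) := by
    rw [Finset.sum_congr rfl hBeq, Finset.sum_neg_distrib, ← Finset.mul_sum]
    congr 1
    congr 1
    rw [Finset.sum_image]
    intro a ha b hb hab
    have hoa : Odd a := Nat.not_even_iff_odd.mp (Finset.mem_filter.mp ha).2
    have hob : Odd b := Nat.not_even_iff_odd.mp (Finset.mem_filter.mp hb).2
    obtain ⟨k, hk⟩ := hoa; obtain ⟨l, hl⟩ := hob; simp only at hab; omega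
  have hB1 : ∀ j ∈ B.image (fun i => (i - 1) / 2), 1 ≤ j := by
    intro j hj
    obtain ⟨i, hi, rfl⟩ := Finset.mem_image.mp hj
    have := h2 i (Finset.mem_filter.mp hi).1
    have hodd : Odd i := Nat.not_even_iff_odd.mp (Finset.mem_filter.mp hi).2
    obtain ⟨k, hk⟩ := hodd; omega
  have hBbound : -(2 - phi) < ∑ i ∈ B, goldenConj ^ i := by
    rw [hBimg, neg_lt_neg_iff, ← hy2]
    have step : c * ∑ j ∈ B.image (fun i => (i - 1) / 2), y ^ j < c * (y / (1 - y)) :=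
      mul_lt_mul_of_pos_left (sum_pow_lt hypos hylt _ hB1) hcpos
    rw [hyc] at step
    calc c * ∑ j ∈ B.image (fun i => (i - 1) / 2), y ^ j < c * c := step
      _ = y := (pow_two c).symm.trans hy.symm
  have hBnonpos : ∑ i ∈ B, goldenConj ^ i ≤ 0 := by
    rw [hBimg, neg_nonpos]
    apply mul_nonneg (le_of_lt hcpos)
    exact Finset.sum_nonneg (fun j _ => le_of_lt (pow_pos hypos j))
  have hsplit : ∑ i ∈ S, goldenConj ^ i
      = ∑ i ∈ A, goldenConj ^ i + ∑ i ∈ B, goldenConj ^ i :=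
    (Finset.sum_filter_add_sum_filter_not S _ _).symm
  constructor
  · rw [hsplit]; linarith
  · rw [hsplit]; linarith

lemma fib_shift_real (i : ℕ) : (Nat.fib (i + 1) : ℝ) = phi * Nat.fib i + goldenConj ^ i := by
  have h := fib_succ_sub_goldenRatio_mul_fib i
  rw [phi_eq]; linarith

lemma rho_nonneg_arg (n : ℕ) : (0:ℝ) ≤ (n : ℝ) * phi + 1 / phi := by
  have h1 : (0:ℝ) ≤ (n:ℝ) * phi := mul_nonneg (Nat.cast_nonneg n) (le_of_lt phi_pos)
  have h2 : (0:ℝ) < 1 / phi := div_pos one_pos phi_pos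
  linarith

lemma rho_le (n : ℕ) : (rho n : ℝ) ≤ (n : ℝ) * phi + 1 / phi :=
  Nat.floor_le (rho_nonneg_arg n)

lemma lt_rho (n : ℕ) : (n : ℝ) * phi + 1 / phi < rho n + 1 :=
  Nat.lt_floor_add_one _

/-- The key shift lemma: shifting any admissible representation of `m` up by one
gives a representation of `rho m`. -/
lemma sum_fib_shift (S : Finset ℕ) (h2 : ∀ i ∈ S, 2 ≤ i) :
    ∑ i ∈ S, Nat.fib (i + 1) = rho (∑ i ∈ S, Nat.fib i) := by
  classical
  set m := ∑ i ∈ S, Nat.fib i with hm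
  set K := ∑ i ∈ S, Nat.fib (i + 1) with hK
  obtain ⟨hlo, hhi⟩ := tail_bounds S h2
  have hKr : (K : ℝ) = phi * m + ∑ i ∈ S, goldenConj ^ i := by
    rw [hK, hm]
    push_cast
    rw [Finset.sum_congr rfl (fun i _ => fib_shift_real i), Finset.sum_add_distrib,
      Finset.mul_sum]
  have hinv : 1 / phi = phi - 1 := inv_phi_eq
  have h1 : (rho m : ℝ) ≤ (m : ℝ) * phi + 1 / phi := rho_le m
  have h2' : (m : ℝ) * phi + 1 / phi < rho m + 1 := lt_rho m
  rw [hinv] at h1 h2'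
  have hKlt : (K : ℝ) < rho m + 1 := by rw [hKr]; linarith
  have hKgt : (rho m : ℝ) - 1 < K := by rw [hKr]; linarith [phi_lt_two]
  have hle : K ≤ rho m := Nat.lt_succ_iff.mp (by exact_mod_cast hKlt)
  have hge : rho m ≤ K := by
    have : (rho m : ℝ) < (K : ℝ) + 1 := by linarith
    exact_mod_cast Nat.lt_succ_iff.mp (by exact_mod_cast this)
  omega

lemma rho_zero : rho 0 = 0 := by
  rw [rho]
  apply Nat.floor_eq_zero.mpr
  rw [inv_phi_eq]
  push_cast
  linarith [phi_lt_two]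

lemma rho_one : rho 1 = 2 := by
  rw [rho, inv_phi_eq]
  rw [Nat.floor_eq_iff (by push_cast; linarith [one_lt_phi])]
  push_cast
  constructor <;> nlinarith [phi_gt_three_halves, phi_lt_two]

lemma rho_gap (n : ℕ) : rho (n + 1) = rho n + 1 ∨ rho (n + 1) = rho n + 2 := by
  have h1 := rho_le n
  have h2 := lt_rho n
  have h3 := rho_le (n + 1)
  have h4 := lt_rho (n + 1)
  push_cast at h3 h4
  have hlt : (rho (n+1) : ℝ) < rho n + 3 := by nlinarith [phi_lt_two]
  have hgt : (rho n : ℝ) + 1 < rho (n+1) + 1 := by nlinarith [one_lt_phi]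
  have hlt' : rho (n+1) < rho n + 3 := by exact_mod_cast hlt
  have hgt' : rho n < rho (n+1) := by
    have : (rho n : ℝ) < rho (n+1) := by linarith
    exact_mod_cast this
  omega

lemma rho_strictMono : StrictMono rho := by
  apply strictMono_nat_of_lt_succ
  intro n
  rcases rho_gap n with h | h <;> omega

lemma rho_gap_prev {n : ℕ} (hn : 1 ≤ n) (h : rho (n + 1) = rho n + 1) :
    rho n = rho (n - 1) + 2 := by
  have hle : rho n ≤ rho (n - 1) + 2 := by
    rcases rho_gap (n - 1) with h' | h' <;>
      (rw [show n - 1 + 1 = n from by omega] at h'; omega)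
  have h1 := rho_le (n - 1)
  have h4 := lt_rho (n + 1)
  rw [h] at h4
  push_cast [hn] at h1 h4
  -- h1 : rho (n-1) ≤ (n-1)φ + 1/φ ; h4 : (n+1)φ + 1/φ < rho n + 2
  have : (rho (n-1) : ℝ) + 1 < rho n := by nlinarith [phi_gt_three_halves]
  have : rho (n-1) + 1 < rho n := by exact_mod_cast this
  omega

lemma rho2_eq (n : ℕ) : rho2 n = n + rho n := by
  rw [rho2, rho]
  have harg : (n : ℝ) * phi ^ 2 + 1 / phi = ((n : ℝ) * phi + 1 / phi) + n := by
    rw [phi_sq]; ring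
  rw [harg, Nat.floor_add_natCast (rho_nonneg_arg n), add_comm]

lemma phi_irr : Irrational phi := phi_eq ▸ goldenRatio_irrational

lemma rho_lt_strict (n : ℕ) : (rho n : ℝ) < (n : ℝ) * phi + 1 / phi := by
  rcases lt_or_eq_of_le (rho_le n) with h | h
  · exact h
  · exfalso
    have hh : ((rho n : ℝ) + 1) = ((n : ℝ) + 1) * phi := by
      rw [inv_phi_eq] at h; linarith
    have hn1 : ((n : ℝ) + 1) ≠ 0 := by positivity
    have : phi = ((rho n : ℝ) + 1) / ((n : ℝ) + 1) := by
      rw [hh]; field_simp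
    apply phi_irr
    exact ⟨((rho n : ℚ) + 1) / ((n : ℚ) + 1), by push_cast [this]; norm_num⟩

lemma rho_rho (n : ℕ) : rho (rho n) = n + rho n := by
  have h1 : (rho n : ℝ) < (n : ℝ) * phi + 1 / phi := rho_lt_strict n
  have h2 := lt_rho n
  rw [inv_phi_eq] at h1 h2
  rw [rho, inv_phi_eq]
  have hnn : (0:ℝ) ≤ (rho n : ℝ) * phi + (phi - 1) := by
    have h0 : (0:ℝ) ≤ (rho n : ℝ) := Nat.cast_nonneg _
    nlinarith [phi_pos, one_lt_phi]
  rw [Nat.floor_eq_iff hnn]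
  push_cast
  constructor
  · nlinarith [phi_sq, one_lt_phi]
  · nlinarith [phi_sq, one_lt_phi]

lemma T_eq_of_gap1 {n : ℕ} (h : rho (n + 1) = rho n + 1) : T n = rho n := by
  have h1 := rho_le n
  have h4 := lt_rho (n + 1)
  rw [h] at h4
  push_cast at h4
  rw [T]
  have harg : (n : ℝ) * phi + 2 / phi = ((n : ℝ) * phi + 1 / phi) + 1 / phi := by ring
  rw [harg, inv_phi_eq] at *
  have hnn : (0:ℝ) ≤ (n : ℝ) * phi + (phi - 1) + (phi - 1) := by
    have h0 : (0:ℝ) ≤ (n:ℝ) * phi := mul_nonneg (Nat.cast_nonneg n) (le_of_lt phi_pos)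
    nlinarith [one_lt_phi]
  rw [Nat.floor_eq_iff hnn]
  constructor
  · have h0 : (0:ℝ) ≤ (n:ℝ) * phi := mul_nonneg (Nat.cast_nonneg n) (le_of_lt phi_pos)
    nlinarith [one_lt_phi]
  · nlinarith [one_lt_phi]

lemma T_eq_of_gap2 {n : ℕ} (h : rho (n + 1) = rho n + 2) : T n = rho n + 1 := by
  have h2 := lt_rho n
  have h3 := rho_le (n + 1)
  rw [h] at h3
  push_cast at h3
  rw [T]
  have harg : (n : ℝ) * phi + 2 / phi = ((n : ℝ) * phi + 1 / phi) + 1 / phi := by ring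
  rw [harg, inv_phi_eq] at *
  have hnn : (0:ℝ) ≤ (n : ℝ) * phi + (phi - 1) + (phi - 1) := by
    have h0 : (0:ℝ) ≤ (n:ℝ) * phi := mul_nonneg (Nat.cast_nonneg n) (le_of_lt phi_pos)
    nlinarith [one_lt_phi]
  rw [Nat.floor_eq_iff hnn]
  push_cast
  constructor
  · nlinarith [one_lt_phi]
  · nlinarith [phi_lt_two]

lemma not_in_range {f : ℕ → ℕ} (hf : StrictMono f) {a K : ℕ}
    (h1 : f a < K) (h2 : K < f (a + 1)) : ∀ m, f m ≠ K := by
  intro m hm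
  rcases le_or_gt m a with h | h
  · have := hf.monotone h; omega
  · have := hf.monotone (show a + 1 ≤ m from h); omega

lemma rr_strictMono : StrictMono (fun n => rho (rho n)) := by
  apply strictMono_nat_of_lt_succ
  intro n
  simp only [rho_rho]
  have := rho_strictMono (show n < n + 1 by omega)
  omega

/-- The set of representations of `N` with all indices `≥ k`. -/
def reps (k N : ℕ) : Set (Finset ℕ) :=
  {S | (∀ i ∈ S, k ≤ i) ∧ ∑ i ∈ S, Nat.fib i = N}

noncomputable def C (k N : ℕ) : ℕ := (reps k N).ncard

lemma le_fib_add_two : ∀ n : ℕ, n ≤ Nat.fib (n + 2) := by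
  intro n
  induction n with
  | zero => simp
  | succ n ih =>
    have h1 : 1 ≤ Nat.fib (n + 1) := Nat.fib_pos.mpr (by omega)
    have h2 := Nat.fib_add_two (n := n + 1)
    have h3 : Nat.fib (n + 1 + 1) = Nat.fib (n + 2) := rfl
    omega

lemma reps_subset_powerset {k N : ℕ} (hk : 2 ≤ k) :
    reps k N ⊆ ↑((Finset.range (N + 3)).powerset) := by
  intro S hS
  obtain ⟨hidx, hsum⟩ := hS
  rw [Finset.mem_coe, Finset.mem_powerset]
  intro i hi
  rw [Finset.mem_range]
  have hfib : Nat.fib i ≤ N := hsum ▸ Finset.single_le_sum (fun j _ => Nat.zero_le _) hi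
  have h2i : 2 ≤ i := le_trans hk (hidx i hi)
  have := le_fib_add_two (i - 2)
  rw [show i - 2 + 2 = i from by omega] at this
  omega

lemma reps_finite {k N : ℕ} (hk : 2 ≤ k) : (reps k N).Finite :=
  Set.Finite.subset ((Finset.range (N + 3)).powerset).finite_toSet (reps_subset_powerset hk)

lemma R_eq_C (N : ℕ) : R N = C 2 N := by
  rw [R, C, ← Nat.card_coe_set_eq]
  rfl

lemma C_split {k N : ℕ} (hk : 2 ≤ k) (hfib : Nat.fib k ≤ N) :
    C k N = C (k + 1) N + C (k + 1) (N - Nat.fib k) := by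
  classical
  have hsplit : reps k N = reps (k + 1) N ∪ (insert k) '' reps (k + 1) (N - Nat.fib k) := by
    ext S
    constructor
    · rintro ⟨hidx, hsum⟩
      by_cases hkS : k ∈ S
      · right
        refine ⟨S.erase k, ⟨?_, ?_⟩, Finset.insert_erase hkS⟩
        · intro i hi
          have := hidx i (Finset.mem_of_mem_erase hi)
          have := Finset.ne_of_mem_erase hi
          omega
        · have := Finset.add_sum_erase S Nat.fib hkS
          omega
      · left
        refine ⟨fun i hi => ?_, hsum⟩
        have h := hidx i hi
        rcases eq_or_lt_of_le h with rfl | h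
        · exact absurd hi hkS
        · omega
    · rintro (⟨hidx, hsum⟩ | ⟨S', ⟨hidx, hsum⟩, rfl⟩)
      · exact ⟨fun i hi => le_trans (Nat.le_succ k) (hidx i hi), hsum⟩
      · have hkS' : k ∉ S' := fun h => by have := hidx k h; omega
        constructor
        · intro i hi
          rcases Finset.mem_insert.mp hi with rfl | hi
          · exact le_refl i
          · exact le_trans (Nat.le_succ k) (hidx i hi)
        · rw [Finset.sum_insert hkS']
          omega
  have hdisj : Disjoint (reps (k + 1) N) ((insert k) '' reps (k + 1) (N - Nat.fib k)) := by
    rw [Set.disjoint_left]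
    rintro S ⟨hidx, _⟩ ⟨S', ⟨hidx', _⟩, rfl⟩
    have : k ∈ insert k S' := Finset.mem_insert_self k S'
    have := hidx k this
    omega
  have hinj : Set.InjOn (insert k) (reps (k + 1) (N - Nat.fib k)) := by
    rintro S ⟨hidx, _⟩ S' ⟨hidx', _⟩ h
    have hkS : k ∉ S := fun hh => by have := hidx k hh; omega
    have hkS' : k ∉ S' := fun hh => by have := hidx' k hh; omega
    rw [← Finset.erase_insert hkS, ← Finset.erase_insert hkS', h]
  rw [C, hsplit, Set.ncard_union_eq hdisj (reps_finite (by omega))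
    (Set.Finite.image _ (reps_finite (by omega)))]
  rw [Set.ncard_image_of_injOn hinj]
  rfl

lemma mem_reps_down {k N : ℕ} (hk : 2 ≤ k) {S : Finset ℕ} (hS : S ∈ reps (k + 1) N) :
    ∃ m, rho m = N ∧ S.image (· - 1) ∈ reps k m ∧ S = (S.image (· - 1)).image (· + 1) := by
  classical
  obtain ⟨hidx, hsum⟩ := hS
  set S₀ := S.image (· - 1) with hS₀
  have hidx₀ : ∀ i ∈ S₀, k ≤ i := by
    intro i hi
    obtain ⟨a, ha, rfl⟩ := Finset.mem_image.mp hi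
    have := hidx a ha; omega
  have hinj : ∀ a ∈ S, ∀ b ∈ S, a - 1 = b - 1 → a = b := by
    intro a ha b hb hab
    have := hidx a ha; have := hidx b hb; omega
  have hsum₀ : ∑ i ∈ S₀, Nat.fib (i + 1) = N := by
    rw [hS₀, Finset.sum_image hinj, ← hsum]
    apply Finset.sum_congr rfl
    intro a ha
    have := hidx a ha
    congr 1
    omega
  have hshift := sum_fib_shift S₀ (fun i hi => le_trans hk (hidx₀ i hi))
  have himg : (S.image (· - 1)).image (· + 1) = S := by
    rw [Finset.image_image]
    have h : S.image ((fun x : ℕ => x + 1) ∘ (fun x : ℕ => x - 1)) = S.image id :=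
      Finset.image_congr (fun a ha => by
        have := hidx a ha
        simp only [Function.comp_apply, id_eq]
        omega)
    rw [h, Finset.image_id]
  exact ⟨∑ i ∈ S₀, Nat.fib i, by rw [← hshift, hsum₀], ⟨hidx₀, rfl⟩, himg.symm⟩

lemma reps_shift_eq {k : ℕ} (hk : 2 ≤ k) (m : ℕ) :
    reps (k + 1) (rho m) = (fun S : Finset ℕ => S.image (· + 1)) '' reps k m := by
  classical
  ext S
  constructor
  · intro hS
    obtain ⟨m', hm', hmem, himg⟩ := mem_reps_down hk hS
    have heq : m' = m := rho_strictMono.injective hm'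
    exact ⟨S.image (· - 1), heq ▸ hmem, himg.symm⟩
  · rintro ⟨S₀, ⟨hidx, hsum⟩, rfl⟩
    have hinj : ∀ a ∈ S₀, ∀ b ∈ S₀, a + 1 = b + 1 → a = b := fun a _ b _ h => by omega
    constructor
    · intro i hi
      obtain ⟨a, ha, rfl⟩ := Finset.mem_image.mp hi
      have := hidx a ha; omega
    · show ∑ i ∈ S₀.image (· + 1), Nat.fib i = rho m
      rw [Finset.sum_image hinj, sum_fib_shift S₀ (fun i hi => le_trans hk (hidx i hi)), hsum]

lemma C_shift {k : ℕ} (hk : 2 ≤ k) (m : ℕ) : C (k + 1) (rho m) = C k m := by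
  have hinj : Set.InjOn (fun S : Finset ℕ => S.image (· + 1)) (reps k m) :=
    fun S _ S' _ h => Finset.image_injective (add_left_injective 1) h
  rw [C, reps_shift_eq hk m, Set.ncard_image_of_injOn hinj]
  rfl

lemma C_not_range {k N : ℕ} (hk : 2 ≤ k) (h : ∀ m, rho m ≠ N) : C (k + 1) N = 0 := by
  rw [C]
  convert Set.ncard_empty (Finset ℕ)
  ext S
  simp only [Set.mem_empty_iff_false, iff_false]
  intro hS
  obtain ⟨m, hm, _, _⟩ := mem_reps_down hk hS
  exact h m hm

lemma C4_rr (m : ℕ) : C 4 (rho (rho m)) = C 2 m := by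
  have h1 := C_shift (k := 3) (by omega) (rho m)
  have h2 := C_shift (k := 2) (by omega) m
  rw [show (3:ℕ) + 1 = 4 from rfl] at h1
  rw [show (2:ℕ) + 1 = 3 from rfl] at h2
  rw [h1, h2]

lemma C4_not_range {N : ℕ} (h : ∀ m, rho (rho m) ≠ N) : C 4 N = 0 := by
  rw [C]
  convert Set.ncard_empty (Finset ℕ)
  ext S
  simp only [Set.mem_empty_iff_false, iff_false]
  intro hS
  obtain ⟨m₁, hm₁, hmem₁, _⟩ := mem_reps_down (k := 3) (by omega) hS
  obtain ⟨m₂, hm₂, _, _⟩ := mem_reps_down (k := 2) (by omega) hmem₁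
  exact h m₂ (by rw [hm₂, hm₁])

lemma fib2 : Nat.fib 2 = 1 := by decide
lemma fib3 : Nat.fib 3 = 2 := by decide

lemma Csplit2 (X : ℕ) (hX : 1 ≤ X) : C 2 X = C 3 X + C 3 (X - 1) := by
  have h := C_split (k := 2) (N := X) (by omega) (by rw [fib2]; omega)
  rw [fib2] at h
  exact h

lemma Csplit3 (X : ℕ) (hX : 2 ≤ X) : C 3 X = C 4 X + C 4 (X - 2) := by
  have h := C_split (k := 3) (N := X) (by omega) (by rw [fib3]; omega)
  rw [fib3] at h
  exact h

lemma Cshift3 (m : ℕ) : C 3 (rho m) = C 2 m := C_shift (k := 2) (by omega) m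

lemma Cempty3 {N : ℕ} (h : ∀ m, rho m ≠ N) : C 3 N = 0 := C_not_range (k := 2) (by omega) h

/-- The recursions `R (ρ₂ n) = R n + R (n-1)` and `R (T n) = R n`. -/
theorem R_recurrences (n : ℕ) (hn : 1 ≤ n) :
    R (rho2 n) = R n + R (n - 1) ∧ R (T n) = R n := by
  have hrho2 : 2 ≤ rho n := by
    have h := rho_strictMono.monotone hn
    rw [rho_one] at h
    exact h
  have hrmono : rho (n - 1) ≤ rho n := rho_strictMono.monotone (by omega)
  constructor
  · -- part 1
    have hNeq : rho2 n = n + rho n := rho2_eq n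
    set N := n + rho n with hN
    have hN3 : 3 ≤ N := by omega
    have hrrn : rho (rho n) = N := rho_rho n
    have hrr1 : rho (rho (n - 1)) = (n - 1) + rho (n - 1) := rho_rho (n - 1)
    rw [hNeq, R_eq_C, R_eq_C, R_eq_C]
    rw [Csplit2 N (by omega), Csplit3 N (by omega), Csplit3 (N - 1) (by omega)]
    have hC4N : C 4 N = C 2 n := by rw [← hrrn, C4_rr]
    have hg := rho_gap (n - 1)
    rw [show n - 1 + 1 = n from by omega] at hg
    rcases hg with hg | hg
    · -- gap 1 : rho n = rho (n-1) + 1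
      have hn2 : 2 ≤ n := by
        by_contra hcon
        have : n = 1 := by omega
        subst this
        rw [rho_one, rho_zero] at hg
        omega
      have hrr1' : rho (rho (n - 1)) = N - 2 := by omega
      have hC4N2 : C 4 (N - 2) = C 2 (n - 1) := by rw [← hrr1', C4_rr]
      have hC4N1 : C 4 (N - 1) = 0 := by
        apply C4_not_range
        have := not_in_range rr_strictMono (a := n - 1) (K := N - 1)
        apply this
        · omega
        · rw [show n - 1 + 1 = n from by omega, hrrn]; omega
      have hC4N3 : C 4 (N - 1 - 2) = 0 := by
        apply C4_not_range
        have hrr2 : rho (rho (n - 2)) = (n - 2) + rho (n - 2) := rho_rho (n - 2)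
        have hmono2 : rho (n - 2) < rho (n - 1) := rho_strictMono (by omega)
        have := not_in_range rr_strictMono (a := n - 2) (K := N - 1 - 2)
        apply this
        · omega
        · rw [show n - 2 + 1 = n - 1 from by omega]; omega
      omega
    · -- gap 2 : rho n = rho (n-1) + 2
      have hrr1' : rho (rho (n - 1)) = N - 3 := by omega
      have hC4N3 : C 4 (N - 1 - 2) = C 2 (n - 1) := by
        rw [show N - 1 - 2 = N - 3 from by omega, ← hrr1', C4_rr]
      have hC4N1 : C 4 (N - 1) = 0 := by
        apply C4_not_range
        have := not_in_range rr_strictMono (a := n - 1) (K := N - 1)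
        apply this
        · omega
        · rw [show n - 1 + 1 = n from by omega, hrrn]; omega
      have hC4N2 : C 4 (N - 2) = 0 := by
        apply C4_not_range
        have := not_in_range rr_strictMono (a := n - 1) (K := N - 2)
        apply this
        · omega
        · rw [show n - 1 + 1 = n from by omega, hrrn]; omega
      omega
  · -- part 2
    rcases rho_gap n with hg | hg
    · -- gap 1 : T n = rho n, and previous gap is 2
      rw [T_eq_of_gap1 hg, R_eq_C, R_eq_C]
      rw [Csplit2 (rho n) (by omega), Cshift3 n]
      have hprev : rho n = rho (n - 1) + 2 := rho_gap_prev hn hg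
      have h0 : C 3 (rho n - 1) = 0 := by
        apply Cempty3
        apply not_in_range rho_strictMono (a := n - 1) (K := rho n - 1)
        · omega
        · rw [show n - 1 + 1 = n from by omega]; omega
      omega
    · -- gap 2 : T n = rho n + 1
      rw [T_eq_of_gap2 hg, R_eq_C, R_eq_C]
      rw [Csplit2 (rho n + 1) (by omega)]
      rw [show rho n + 1 - 1 = rho n from by omega, Cshift3 n]
      have h0 : C 3 (rho n + 1) = 0 := by
        apply Cempty3
        apply not_in_range rho_strictMono (a := n) (K := rho n + 1)
        · omega
        · omega
      omega
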